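/- For convex bodies K, L in ℝⁿ, |K + L| · M(K,L) ≤ C(2n, n) · |K| · |L|, where C(2n,n) is the central binomial coefficient (Rogers–Shephard inequality for two bodies). -/

import Mathlib

open MeasureTheory Set Module
open scoped Pointwise ENNReal Nat

/-!
Let `g y = |K ∩ (y - L)|`, so that `∫ g = |K| |L|` by Fubini. For `k ∈ K`, `l ∈ L`, convexity gives
`s • (K ∩ (x - L)) + (1 - s) • k ⊆ K ∩ (s • x + (1 - s) • (k + l) - L)`, hence
`g (s • x + (1 - s) • y) ≥ sⁿ g x` for `y ∈ K + L`: the superlevel set `{g ≥ sⁿ g x}` contains a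
homothetic copy of `K + L` of ratio `1 - s`. The layer-cake formula with `t = sⁿ g x` then gives
`|K| |L| ≥ |K + L| g x · n ∫₀¹ sⁿ⁻¹ (1 - s)ⁿ ds = |K + L| g x / C(2n, n)`.
-/

theorem integral_pow_mul_one_sub_pow (j k : ℕ) :
    ∫ x in (0 : ℝ)..1, x ^ j * (1 - x) ^ k = (j ! * k ! : ℝ) / (j + k + 1)! := by
  induction k generalizing j with
  | zero =>
    simp only [pow_zero, mul_one, integral_pow, one_pow, add_zero, Nat.factorial_succ]
    push_cast
    field_simp
    simp
  | succ k ih =>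
    have hsplit : ∀ x : ℝ,
        x ^ j * (1 - x) ^ (k + 1) = x ^ j * (1 - x) ^ k - x ^ (j + 1) * (1 - x) ^ k :=
      fun x => by ring
    simp_rw [hsplit]
    rw [intervalIntegral.integral_sub (by apply Continuous.intervalIntegrable; fun_prop)
      (by apply Continuous.intervalIntegrable; fun_prop), ih, ih,
      show j + 1 + k + 1 = j + k + 1 + 1 by ring, show j + (k + 1) + 1 = j + k + 1 + 1 by ring,
      Nat.factorial_succ (j + k + 1), Nat.factorial_succ j, Nat.factorial_succ k]
    push_cast
    field_simp
    ring

theorem setLIntegral_Ioo_pow_mul_one_sub_pow_eq_inv_choose (n : ℕ) :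
    ∫⁻ s in Ioo (0 : ℝ) 1, ENNReal.ofReal ((n + 1) * s ^ n * (1 - s) ^ (n + 1)) =
      ((2 * n + 2).choose (n + 1) : ℝ≥0∞)⁻¹ := by
  rw [← ofReal_integral_eq_lintegral_ofReal, ← integral_Ioc_eq_integral_Ioo,
    ← intervalIntegral.integral_of_le zero_le_one]
  · simp_rw [mul_assoc]
    rw [intervalIntegral.integral_const_mul, integral_pow_mul_one_sub_pow]
    have hC : ((2 * n + 2).choose (n + 1) : ℝ) * (n + 1)! * (n + 1)! = (2 * n + 2)! := by
      have h := Nat.choose_mul_factorial_mul_factorial (Nat.le_add_left (n + 1) (n + 1))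
      rw [Nat.add_sub_cancel, show n + 1 + (n + 1) = 2 * n + 2 by ring] at h
      exact_mod_cast h
    have hpos : (0 : ℝ) < (2 * n + 2).choose (n + 1) := by
      exact_mod_cast Nat.choose_pos (by omega)
    rw [show n + (n + 1) + 1 = 2 * n + 2 by ring, ← hC, ← ENNReal.ofReal_natCast,
      ← ENNReal.ofReal_inv_of_pos hpos, Nat.factorial_succ n]
    congr 1
    push_cast
    field_simp
  · exact (Continuous.integrableOn_Icc (by fun_prop)).mono_set Ioo_subset_Icc_self
  · filter_upwards [ae_restrict_mem measurableSet_Ioo] with s hs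
    have : 0 ≤ 1 - s := by linarith [hs.2]
    have : 0 ≤ s := hs.1.le
    positivity

/-- The layer-cake formula over `t ∈ (0, c)`, in the variable `s` with `t = c * s ^ (n + 1)`. -/
theorem setLIntegral_Ioo_pow_meas_le_le_lintegral {α : Type*} [MeasurableSpace α]
    (μ : Measure α) {f : α → ℝ} (hf_nonneg : 0 ≤ f) (hf : Measurable f) {c : ℝ} (hc : 0 < c)
    (n : ℕ) :
    ∫⁻ s in Ioo (0 : ℝ) 1,
        ENNReal.ofReal (c * ((n + 1) * s ^ n)) * μ {ω | c * s ^ (n + 1) ≤ f ω} ≤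
      ∫⁻ ω, ENNReal.ofReal (f ω) ∂μ := by
  have hderiv : ∀ s ∈ Ioo (0 : ℝ) 1,
      HasDerivWithinAt (fun s => c * s ^ (n + 1)) (c * ((n + 1) * s ^ n)) (Ioo 0 1) s := by
    intro s _
    simpa using ((hasDerivAt_pow (n + 1) s).const_mul c).hasDerivWithinAt
  have hinj : InjOn (fun s : ℝ => c * s ^ (n + 1)) (Ioo 0 1) := fun s hs t ht hst =>
    (pow_left_strictMonoOn₀ n.succ_ne_zero).injOn hs.1.le ht.1.le (mul_left_cancel₀ hc.ne' hst)
  rw [lintegral_eq_lintegral_meas_le μ (ae_of_all _ hf_nonneg) hf.aemeasurable]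
  calc _ = ∫⁻ t in (fun s => c * s ^ (n + 1)) '' Ioo 0 1, μ {ω | t ≤ f ω} := by
        rw [lintegral_image_eq_lintegral_abs_deriv_mul measurableSet_Ioo hderiv hinj]
        refine setLIntegral_congr_fun measurableSet_Ioo fun s hs => ?_
        rw [abs_of_nonneg (by have := hs.1; positivity)]
    _ ≤ ∫⁻ t in Ioi 0, μ {ω | t ≤ f ω} :=
        lintegral_mono_set (image_subset_iff.2 fun s hs => mul_pos hc (pow_pos hs.1 _))

section AddCommGroup

variable {G : Type*} [AddCommGroup G] {K L : Set G}

theorem preimage_prodMk_preimage_sub_prod (y : G) :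
    Prod.mk y ⁻¹' ((fun z : G × G => (z.1 - z.2, z.2)) ⁻¹' L ×ˢ K) = K ∩ ({y} - L) := by
  ext x
  simp only [mem_preimage, mem_prod, singleton_sub, mem_inter_iff, mem_image]
  constructor
  · rintro ⟨hL, hK⟩
    exact ⟨hK, y - x, hL, sub_sub_cancel y x⟩
  · rintro ⟨hK, l, hl, rfl⟩
    simpa [hK] using hl

theorem measure_add_mul_measure_inter_singleton_sub_le_of_subsingleton [Subsingleton G]
    [MeasurableSpace G] (μ : Measure G) (x : G) :
    μ (K + L) * μ (K ∩ ({x} - L)) ≤ μ K * μ L := by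
  rcases (K + L).eq_empty_or_nonempty with hKL | ⟨_, k, hk, l, hl, -⟩
  · simp [hKL]
  · rw [Subsingleton.eq_univ_of_nonempty ⟨k, hk⟩, Subsingleton.eq_univ_of_nonempty ⟨l, hl⟩]
    exact mul_le_mul' (measure_mono (subset_univ _)) (measure_mono (subset_univ _))

variable [MeasurableSpace G] [MeasurableAdd₂ G] [MeasurableNeg G] (μ : Measure G) [SFinite μ]

theorem measurable_measure_inter_singleton_sub (hK : MeasurableSet K) (hL : MeasurableSet L) :
    Measurable fun y => μ (K ∩ ({y} - L)) := by
  simp_rw [← preimage_prodMk_preimage_sub_prod]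
  exact measurable_measure_prodMk_left ((hL.prod hK).preimage (by fun_prop))

theorem lintegral_measure_inter_singleton_sub [μ.IsAddRightInvariant]
    (hK : MeasurableSet K) (hL : MeasurableSet L) :
    ∫⁻ y, μ (K ∩ ({y} - L)) ∂μ = μ K * μ L := by
  simp_rw [← preimage_prodMk_preimage_sub_prod]
  rw [← Measure.prod_apply ((hL.prod hK).preimage (by fun_prop)),
    (measurePreserving_sub_prod μ μ).measure_preimage (hL.prod hK).nullMeasurableSet,
    Measure.prod_prod, mul_comm]

end AddCommGroup

theorem Convex.smul_inter_singleton_sub_add_smul_subset {𝕜 E : Type*} [CommRing 𝕜]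
    [PartialOrder 𝕜] [AddCommGroup E] [Module 𝕜 E] {K L : Set E} (hK : Convex 𝕜 K) (hL : Convex 𝕜 L)
    {a b : 𝕜} (ha : 0 ≤ a) (hb : 0 ≤ b) (hab : a + b = 1) (x y : E) :
    a • (K ∩ ({x} - L)) + b • (K ∩ ({y} - L)) ⊆ K ∩ ({a • x + b • y} - L) := by
  rintro _ ⟨_, ⟨u, ⟨huK, _, rfl, l, hl, rfl⟩, rfl⟩, _, ⟨v, ⟨hvK, _, rfl, l', hl', rfl⟩, rfl⟩, rfl⟩
  refine ⟨hK huK hvK ha hb hab, ?_⟩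
  simp only [singleton_sub, mem_image]
  exact ⟨a • l + b • l', hL hl hl' ha hb hab, by module⟩

section AddHaar

variable {E : Type*} [NormedAddCommGroup E] [NormedSpace ℝ E] [MeasurableSpace E] [BorelSpace E]
  [FiniteDimensional ℝ E] (μ : Measure E) [μ.IsAddHaarMeasure] {K L : Set E}

theorem ofReal_pow_mul_measure_inter_singleton_sub_le (hK : Convex ℝ K) (hL : Convex ℝ L)
    (x : E) {y : E} (hy : y ∈ K + L) {s : ℝ} (hs₀ : 0 ≤ s) (hs₁ : s ≤ 1) :
    ENNReal.ofReal (s ^ finrank ℝ E) * μ (K ∩ ({x} - L)) ≤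
      μ (K ∩ ({s • x + (1 - s) • y} - L)) := by
  obtain ⟨k, hk, l, hl, rfl⟩ := hy
  have hkl : {k} ⊆ K ∩ ({k + l} - L) := by
    simpa [hk] using ⟨l, hl, add_sub_cancel_right k l⟩
  have hsub := (add_subset_add_left (smul_set_mono hkl)).trans
    (hK.smul_inter_singleton_sub_add_smul_subset hL hs₀ (sub_nonneg.2 hs₁) (by ring) x (k + l))
  calc ENNReal.ofReal (s ^ finrank ℝ E) * μ (K ∩ ({x} - L))
      = μ (s • (K ∩ ({x} - L)) + (1 - s) • {k}) := by
        rw [smul_set_singleton, add_singleton, image_add_right, measure_preimage_add_right,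
          Measure.addHaar_smul, abs_of_nonneg (pow_nonneg hs₀ _)]
    _ ≤ _ := measure_mono hsub

theorem measure_add_mul_ofReal_one_sub_pow_le (hK : Convex ℝ K) (hL : Convex ℝ L) (x : E)
    {s : ℝ} (hs₀ : 0 ≤ s) (hs₁ : s ≤ 1) :
    μ (K + L) * ENNReal.ofReal ((1 - s) ^ finrank ℝ E) ≤
      μ {y | ENNReal.ofReal (s ^ finrank ℝ E) * μ (K ∩ ({x} - L)) ≤ μ (K ∩ ({y} - L))} := by
  calc μ (K + L) * ENNReal.ofReal ((1 - s) ^ finrank ℝ E)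
      = μ ({s • x} + (1 - s) • (K + L)) := by
        rw [singleton_add, image_add_left, measure_preimage_add, Measure.addHaar_smul,
          abs_of_nonneg (pow_nonneg (sub_nonneg.2 hs₁) _), mul_comm]
    _ ≤ _ := by
        refine measure_mono ?_
        rintro _ ⟨_, rfl, _, ⟨y, hy, rfl⟩, rfl⟩
        exact ofReal_pow_mul_measure_inter_singleton_sub_le μ hK hL x hy hs₀ hs₁

theorem measure_add_mul_measure_inter_singleton_sub_div_choose_le (hK : Convex ℝ K)
    (hL : Convex ℝ L) (hKm : MeasurableSet K) (hLm : MeasurableSet L) (hK_fin : μ K ≠ ∞)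
    {n : ℕ} (hn : finrank ℝ E = n + 1) (x : E) :
    μ (K + L) * (μ (K ∩ ({x} - L)) / (2 * n + 2).choose (n + 1)) ≤ μ K * μ L := by
  set g : E → ℝ≥0∞ := fun y => μ (K ∩ ({y} - L))
  change μ (K + L) * (g x / _) ≤ _
  have hg_fin : ∀ y, g y ≠ ∞ := fun y =>
    ne_top_of_le_ne_top hK_fin (measure_mono inter_subset_left)
  rcases eq_or_ne (g x) 0 with hx0 | hx0
  · simp [hx0]
  set m := (g x).toReal
  have hm : 0 < m := ENNReal.toReal_pos hx0 (hg_fin x)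
  have hlevel : ∀ s ∈ Ioo (0 : ℝ) 1,
      ENNReal.ofReal (m * ((n + 1) * s ^ n * (1 - s) ^ (n + 1))) * μ (K + L) ≤
        ENNReal.ofReal (m * ((n + 1) * s ^ n)) * μ {y | m * s ^ (n + 1) ≤ (g y).toReal} := by
    intro s hs
    have hs₀ := hs.1.le
    rw [← mul_assoc m, ENNReal.ofReal_mul (by positivity), mul_assoc, mul_comm _ (μ (K + L))]
    gcongr
    refine (hn ▸ measure_add_mul_ofReal_one_sub_pow_le μ hK hL x hs₀ hs.2.le).trans
      (measure_mono fun y hy => ?_)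
    have := ENNReal.toReal_mono (hg_fin y) hy
    rwa [ENNReal.toReal_mul, ENNReal.toReal_ofReal (by positivity), mul_comm] at this
  calc μ (K + L) * (g x / (2 * n + 2).choose (n + 1))
      = ∫⁻ s in Ioo 0 1,
          ENNReal.ofReal (m * ((n + 1) * s ^ n * (1 - s) ^ (n + 1))) * μ (K + L) := by
        simp_rw [ENNReal.ofReal_mul hm.le]
        rw [lintegral_mul_const _ (by fun_prop), lintegral_const_mul' _ _ ENNReal.ofReal_ne_top,
          setLIntegral_Ioo_pow_mul_one_sub_pow_eq_inv_choose, ENNReal.ofReal_toReal (hg_fin x),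
          div_eq_mul_inv, mul_comm]
    _ ≤ ∫⁻ s in Ioo 0 1, ENNReal.ofReal (m * ((n + 1) * s ^ n)) *
          μ {y | m * s ^ (n + 1) ≤ (g y).toReal} := setLIntegral_mono' measurableSet_Ioo hlevel
    _ ≤ ∫⁻ y, ENNReal.ofReal (g y).toReal ∂μ :=
        setLIntegral_Ioo_pow_meas_le_le_lintegral μ (fun y => ENNReal.toReal_nonneg)
          (measurable_measure_inter_singleton_sub μ hKm hLm).ennreal_toReal hm n
    _ = ∫⁻ y, g y ∂μ := lintegral_congr fun y => ENNReal.ofReal_toReal (hg_fin y)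
    _ = μ K * μ L := lintegral_measure_inter_singleton_sub μ hKm hLm

theorem measure_add_mul_measure_inter_singleton_sub_le (hK : Convex ℝ K) (hL : Convex ℝ L)
    (hKm : MeasurableSet K) (hLm : MeasurableSet L) (hK_fin : μ K ≠ ∞) (x : E) :
    μ (K + L) * μ (K ∩ ({x} - L)) ≤ (2 * finrank ℝ E).choose (finrank ℝ E) * μ K * μ L := by
  obtain hd | hd := eq_or_ne (finrank ℝ E) 0
  · have : Subsingleton E := finrank_zero_iff.1 hd
    simpa [hd] using measure_add_mul_measure_inter_singleton_sub_le_of_subsingleton μ x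
  obtain ⟨n, hn⟩ := Nat.exists_eq_add_one_of_ne_zero hd
  have hC : ((2 * n + 2).choose (n + 1) : ℝ≥0∞) ≠ 0 :=
    Nat.cast_ne_zero.2 (Nat.choose_pos (by omega)).ne'
  rw [hn, show 2 * (n + 1) = 2 * n + 2 by ring, mul_assoc _ (μ K),
    ← ENNReal.mul_div_cancel hC (ENNReal.natCast_ne_top _) (b := μ (K ∩ ({x} - L))), mul_left_comm]
  exact mul_le_mul_right
    (measure_add_mul_measure_inter_singleton_sub_div_choose_le μ hK hL hKm hLm hK_fin hn x) _

end AddHaar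

theorem RogersShephard_two_bodies_general (n : ℕ) (K L : Set (EuclideanSpace ℝ (Fin n)))
    (hK : IsCompact K) (hKc : Convex ℝ K)
    (hL : IsCompact L) (hLc : Convex ℝ L) :
    (volume (K + L)).toReal *
        (⨆ z : EuclideanSpace ℝ (Fin n), volume (K ∩ ({z} - L))).toReal ≤
      (Nat.choose (2 * n) n : ℝ) * (volume K).toReal * (volume L).toReal := by
  have hsup : volume (K + L) * ⨆ z, volume (K ∩ ({z} - L)) ≤
      (2 * n).choose n * volume K * volume L := by
    rw [ENNReal.mul_iSup]
    refine iSup_le fun z => ?_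
    simpa only [finrank_euclideanSpace_fin] using
      measure_add_mul_measure_inter_singleton_sub_le volume hKc hLc hK.measurableSet
      hL.measurableSet hK.measure_lt_top.ne z
  rw [← ENNReal.toReal_mul]
  calc _ ≤ ((2 * n).choose n * volume K * volume L).toReal :=
        ENNReal.toReal_mono (ENNReal.mul_ne_top (ENNReal.mul_ne_top (ENNReal.natCast_ne_top _)
          hK.measure_lt_top.ne) hL.measure_lt_top.ne) hsup
    _ = _ := by simp [ENNReal.toReal_mul]

theorem RogersShephard_two_bodies (n : ℕ) (K L : Set (EuclideanSpace ℝ (Fin n)))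
    (hK : IsCompact K) (hKc : Convex ℝ K) (hKi : (interior K).Nonempty)
    (hL : IsCompact L) (hLc : Convex ℝ L) (hLi : (interior L).Nonempty) :
    (volume (K + L)).toReal *
        (⨆ z : EuclideanSpace ℝ (Fin n), volume (K ∩ ({z} - L))).toReal ≤
      (Nat.choose (2 * n) n : ℝ) * (volume K).toReal * (volume L).toReal :=
  RogersShephard_two_bodies_general n K L hK hKc hL hLc
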